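/- Let A be a commutative ring. Let T_A ⊆ A ⊗_ℤ A be the subgroup generated by all x ⊗ (a²y) − (a²x) ⊗ y and x ⊗ (2ay) − (2ax) ⊗ y for a, x, y ∈ A, and write Q = (A ⊗_ℤ A)/T_A. Let 2A denote the ideal {2a : a ∈ A}. Then: (1) the map ι : 2A → Q, 2a ↦ class of (2a) ⊗ 1, is a well-defined injective homomorphism of abelian groups; (2) the cokernel of ι is isomorphic to (A/2 ⊗_ℤ A/2)/T', where A/2 = A/2A and T' is the subgroup generated by all x̄ ⊗ (ā² ȳ) − (ā² x̄) ⊗ ȳ for ā, x̄, ȳ ∈ A/2. In other words, there is a short exact sequence 0 → 2A → Q → (A/2 ⊗_ℤ A/2)/T' → 0. -/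

import Mathlib

/-!
The multiplication map `A ⊗ A → A` kills `T_A` and sends the class of `2a ⊗ 1` back to `2a`,
so `ι` is injective. Reduction mod 2 sends `T_A` into `T'` (the `2a`-relations die), and every
generator of `T'` lifts to a generator of `T_A`; hence `π` exists, is onto, and its kernel is the
image of the preimage of `T'`. By right exactness of `⊗`, the kernel of `A ⊗ A → A/2 ⊗ A/2` is
generated by the tensors `x ⊗ 2b` and `2b ⊗ y`, and modulo `T_A` the `2a`-relations move the
factor `2b` across, making them congruent to `2bx ⊗ 1` and `2by ⊗ 1`. So the preimage of `T'` is
`T_A + (2A ⊗ 1)`, whose image in `Q` is the range of `ι`.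
-/

open TensorProduct

section

variable {A : Type*} [CommRing A]

variable (A) in
def squareTwoRelations : AddSubgroup (A ⊗[ℤ] A) :=
  AddSubgroup.closure {z : A ⊗[ℤ] A | ∃ a x y : A,
    z = x ⊗ₜ[ℤ] (a ^ 2 * y) - (a ^ 2 * x) ⊗ₜ[ℤ] y ∨
    z = x ⊗ₜ[ℤ] (2 * a * y) - (2 * a * x) ⊗ₜ[ℤ] y}

def squareRelations (B : Type*) [CommRing B] : AddSubgroup (B ⊗[ℤ] B) :=
  AddSubgroup.closure {z | ∃ a x y : B, z = x ⊗ₜ[ℤ] (a ^ 2 * y) - (a ^ 2 * x) ⊗ₜ[ℤ] y}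

variable (A) in
def spanTwoTmulOne : AddSubgroup (A ⊗[ℤ] A) :=
  (Ideal.span {(2 : A)}).toAddSubgroup.map ((TensorProduct.mk ℤ A A).flip 1).toAddMonoidHom

def tensorQuotientMap (I : Ideal A) : A ⊗[ℤ] A →ₗ[ℤ] (A ⧸ I) ⊗[ℤ] (A ⧸ I) :=
  map (Ideal.Quotient.mk I).toIntAlgHom.toLinearMap (Ideal.Quotient.mk I).toIntAlgHom.toLinearMap

@[simp]
lemma tensorQuotientMap_tmul (I : Ideal A) (x y : A) :
    tensorQuotientMap I (x ⊗ₜ y) = Ideal.Quotient.mk I x ⊗ₜ Ideal.Quotient.mk I y :=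
  rfl

lemma tensorQuotientMap_surjective (I : Ideal A) : Function.Surjective (tensorQuotientMap I) :=
  map_surjective Ideal.Quotient.mk_surjective Ideal.Quotient.mk_surjective

lemma mul'_tmul_mul_sub_mul_tmul {R : Type*} [CommSemiring R] [Algebra R A] (c x y : A) :
    LinearMap.mul' R A (x ⊗ₜ (c * y) - (c * x) ⊗ₜ y) = 0 := by
  simp only [map_sub, LinearMap.mul'_apply]
  ring

lemma squareTwoRelations_le_ker_mul' :
    squareTwoRelations A ≤ (LinearMap.mul' ℤ A).toAddMonoidHom.ker := by
  rw [squareTwoRelations, AddSubgroup.closure_le]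
  rintro z ⟨a, x, y, rfl | rfl⟩ <;> exact mul'_tmul_mul_sub_mul_tmul ..

lemma injective_mk_tmul_one {T : AddSubgroup (A ⊗[ℤ] A)}
    (hT : T ≤ (LinearMap.mul' ℤ A).toAddMonoidHom.ker) :
    Function.Injective fun x : A => (QuotientAddGroup.mk (x ⊗ₜ[ℤ] (1 : A)) : A ⊗[ℤ] A ⧸ T) :=
  Function.LeftInverse.injective (g := QuotientAddGroup.lift T _ hT) fun x => by simp

lemma squareTwoRelations_le_comap {I : Ideal A} (h2 : (2 : A) ∈ I) :
    squareTwoRelations A ≤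
      (squareRelations (A ⧸ I)).comap (tensorQuotientMap I).toAddMonoidHom := by
  rw [squareTwoRelations, AddSubgroup.closure_le]
  rintro z ⟨a, x, y, rfl | rfl⟩
  · exact AddSubgroup.subset_closure ⟨Ideal.Quotient.mk I a, Ideal.Quotient.mk I x,
      Ideal.Quotient.mk I y, by simp⟩
  · simp [Ideal.Quotient.eq_zero_iff_mem.mpr h2]

lemma squareRelations_le_map (I : Ideal A) :
    squareRelations (A ⧸ I) ≤
      (squareTwoRelations A).map (tensorQuotientMap I).toAddMonoidHom := by
  rw [squareRelations, AddSubgroup.closure_le]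
  rintro z ⟨a, x, y, rfl⟩
  obtain ⟨a, rfl⟩ := Ideal.Quotient.mk_surjective a
  obtain ⟨x, rfl⟩ := Ideal.Quotient.mk_surjective x
  obtain ⟨y, rfl⟩ := Ideal.Quotient.mk_surjective y
  exact ⟨_, AddSubgroup.subset_closure ⟨a, x, y, Or.inl rfl⟩, by simp⟩

lemma AddSubgroup.mem_of_mem_span_int {M : Type*} [AddCommGroup M] [Module ℤ M] {s : Set M}
    {S : AddSubgroup M} (hs : s ⊆ S) {w : M} (hw : w ∈ Submodule.span ℤ s) : w ∈ S :=
  Submodule.span_induction (fun _ h => hs h) S.zero_mem (fun _ _ _ _ => S.add_mem)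
    (fun n _ _ h => by simpa only [← Int.cast_smul_eq_zsmul ℤ, Int.cast_id] using S.zsmul_mem h n)
    hw

lemma ker_tensorQuotientMap_le {I : Ideal A} {S : AddSubgroup (A ⊗[ℤ] A)}
    (hl : ∀ x, ∀ i ∈ I, x ⊗ₜ[ℤ] i ∈ S) (hr : ∀ i ∈ I, ∀ y, i ⊗ₜ[ℤ] y ∈ S) {w : A ⊗[ℤ] A}
    (hw : tensorQuotientMap I w = 0) : w ∈ S := by
  have hexact := LinearMap.exact_subtype_ker_map (Ideal.Quotient.mk I).toIntAlgHom.toLinearMap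
  obtain ⟨u, hu, v, hv, rfl⟩ := Submodule.mem_sup.mp <|
    (map_ker hexact Ideal.Quotient.mk_surjective hexact Ideal.Quotient.mk_surjective).le hw
  rw [LinearMap.lTensor, range_map_eq_span_tmul] at hu
  rw [LinearMap.rTensor, range_map_eq_span_tmul] at hv
  refine S.add_mem (S.mem_of_mem_span_int ?_ hu) (S.mem_of_mem_span_int ?_ hv)
  · rintro _ ⟨x, i, rfl⟩
    exact hl x i (Ideal.Quotient.eq_zero_iff_mem.mp i.2)
  · rintro _ ⟨i, y, rfl⟩
    exact hr i (Ideal.Quotient.eq_zero_iff_mem.mp i.2) y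

lemma tmul_sub_tmul_mem_squareTwoRelations (b x y : A) :
    x ⊗ₜ[ℤ] (2 * b * y) - (2 * b * x) ⊗ₜ[ℤ] y ∈ squareTwoRelations A :=
  AddSubgroup.subset_closure ⟨b, x, y, Or.inr rfl⟩

lemma two_mul_tmul_one_mem_spanTwoTmulOne (b : A) : (2 * b) ⊗ₜ[ℤ] (1 : A) ∈ spanTwoTmulOne A :=
  ⟨2 * b, Ideal.mul_mem_right b _ (Ideal.mem_span_singleton_self 2), rfl⟩

lemma tmul_two_mul_mem_sup (x b : A) :
    x ⊗ₜ[ℤ] (2 * b) ∈ squareTwoRelations A ⊔ spanTwoTmulOne A := by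
  -- `x ⊗ 2b = (x ⊗ 2b·1 - 2b·x ⊗ 1) + 2bx ⊗ 1`
  have h := add_mem (AddSubgroup.mem_sup_left (tmul_sub_tmul_mem_squareTwoRelations b x 1))
    (AddSubgroup.mem_sup_right (two_mul_tmul_one_mem_spanTwoTmulOne (b * x)))
  rwa [mul_one, ← mul_assoc, sub_add_cancel] at h

lemma two_mul_tmul_mem_sup (b y : A) :
    (2 * b) ⊗ₜ[ℤ] y ∈ squareTwoRelations A ⊔ spanTwoTmulOne A := by
  -- `2b ⊗ y = 1 ⊗ 2by - (1 ⊗ 2b·y - 2b·1 ⊗ y)`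
  have h := sub_mem (tmul_two_mul_mem_sup 1 (b * y))
    (AddSubgroup.mem_sup_left (tmul_sub_tmul_mem_squareTwoRelations b 1 y))
  rwa [mul_one, ← mul_assoc, sub_sub_cancel] at h

lemma mem_sup_of_tensorQuotientMap_eq_zero {w : A ⊗[ℤ] A}
    (hw : tensorQuotientMap (Ideal.span {(2 : A)}) w = 0) :
    w ∈ squareTwoRelations A ⊔ spanTwoTmulOne A := by
  refine ker_tensorQuotientMap_le (fun x i hi => ?_) (fun i hi y => ?_) hw
  · obtain ⟨b, rfl⟩ := Ideal.mem_span_singleton'.mp hi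
    exact mul_comm 2 b ▸ tmul_two_mul_mem_sup x b
  · obtain ⟨b, rfl⟩ := Ideal.mem_span_singleton'.mp hi
    exact mul_comm 2 b ▸ two_mul_tmul_mem_sup b y

lemma comap_tensorQuotientMap_squareRelations :
    (squareRelations (A ⧸ Ideal.span {(2 : A)})).comap
        (tensorQuotientMap (Ideal.span {(2 : A)})).toAddMonoidHom =
      squareTwoRelations A ⊔ spanTwoTmulOne A := by
  refine le_antisymm (fun z hz => ?_)
    (sup_le (squareTwoRelations_le_comap (Ideal.mem_span_singleton_self 2)) ?_)
  · obtain ⟨t, ht, hft⟩ := squareRelations_le_map _ hz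
    have hzt := mem_sup_of_tensorQuotientMap_eq_zero
      ((map_sub _ z t).trans (sub_eq_zero.mpr hft.symm))
    simpa using add_mem (AddSubgroup.mem_sup_left ht) hzt
  · rintro _ ⟨i, hi, rfl⟩
    simp [Ideal.Quotient.eq_zero_iff_mem.mpr hi]

lemma mem_map_mk'_sup_spanTwoTmulOne {T : AddSubgroup (A ⊗[ℤ] A)} {q : A ⊗[ℤ] A ⧸ T} :
    q ∈ (T ⊔ spanTwoTmulOne A).map (QuotientAddGroup.mk' T) ↔
      ∃ i : Ideal.span {(2 : A)}, QuotientAddGroup.mk ((i : A) ⊗ₜ[ℤ] (1 : A)) = q := by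
  rw [AddSubgroup.map_sup, QuotientAddGroup.map_mk'_self, bot_sup_eq, spanTwoTmulOne,
    AddSubgroup.map_map]
  simp

end

/-- Let `A` be a commutative ring, `T_A ⊆ A ⊗_ℤ A` the subgroup generated by
`x ⊗ (a²y) − (a²x) ⊗ y` and `x ⊗ (2ay) − (2ax) ⊗ y`, and `Q = (A ⊗_ℤ A)/T_A`. Then
`ι : 2A → Q`, `2a ↦ [(2a) ⊗ 1]`, is a well-defined injective additive map, and there is
a short exact sequence `0 → 2A → Q → (A/2 ⊗_ℤ A/2)/T' → 0`, where the third map is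
induced by the quotient map and `T'` is generated by the elements
`x̄ ⊗ (ā²ȳ) − (ā²x̄) ⊗ ȳ`. -/
theorem thr_pi0_ses (A : Type*) [CommRing A]
    (T : AddSubgroup (A ⊗[ℤ] A))
    (hT : T = AddSubgroup.closure
      {z : A ⊗[ℤ] A | ∃ a x y : A,
        z = x ⊗ₜ[ℤ] (a ^ 2 * y) - (a ^ 2 * x) ⊗ₜ[ℤ] y ∨
        z = x ⊗ₜ[ℤ] (2 * a * y) - (2 * a * x) ⊗ₜ[ℤ] y})
    (T' : AddSubgroup ((A ⧸ Ideal.span {(2 : A)}) ⊗[ℤ] (A ⧸ Ideal.span {(2 : A)})))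
    (hT' : T' = AddSubgroup.closure
      {z | ∃ a x y : A ⧸ Ideal.span {(2 : A)},
        z = x ⊗ₜ[ℤ] (a ^ 2 * y) - (a ^ 2 * x) ⊗ₜ[ℤ] y}) :
    let ι : ↥(Ideal.span {(2 : A)}) → (A ⊗[ℤ] A) ⧸ T := fun x =>
      QuotientAddGroup.mk ((x : A) ⊗ₜ[ℤ] (1 : A))
    -- `ι` is a well-defined injective homomorphism of abelian groups
    Function.Injective ι ∧
    (∀ x y : ↥(Ideal.span {(2 : A)}), ι (x + y) = ι x + ι y) ∧
    -- the cokernel of `ι` is `(A/2 ⊗ A/2)/T'`, via the map induced by the quotient map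
    ∃ π : (A ⊗[ℤ] A) ⧸ T →+
        ((A ⧸ Ideal.span {(2 : A)}) ⊗[ℤ] (A ⧸ Ideal.span {(2 : A)})) ⧸ T',
      (∀ x y : A, π (QuotientAddGroup.mk (x ⊗ₜ[ℤ] y)) =
        QuotientAddGroup.mk
          ((Ideal.Quotient.mk (Ideal.span {(2 : A)}) x) ⊗ₜ[ℤ]
            (Ideal.Quotient.mk (Ideal.span {(2 : A)}) y))) ∧
      Function.Surjective π ∧
      ∀ q : (A ⊗[ℤ] A) ⧸ T, π q = 0 ↔ q ∈ Set.range ι := by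
  obtain rfl : T = squareTwoRelations A := hT
  obtain rfl : T' = squareRelations (A ⧸ Ideal.span {(2 : A)}) := hT'
  intro ι
  refine ⟨(injective_mk_tmul_one squareTwoRelations_le_ker_mul').comp Subtype.val_injective,
    fun x y => by simp [ι, add_tmul],
    QuotientAddGroup.map _ _ _ (squareTwoRelations_le_comap (Ideal.mem_span_singleton_self _)),
    fun x y => rfl,
    QuotientAddGroup.map_surjective_of_surjective _ _ _
      (QuotientAddGroup.mk_surjective.comp (tensorQuotientMap_surjective _)) _, fun q => ?_⟩
  rw [← AddMonoidHom.mem_ker, QuotientAddGroup.ker_map, comap_tensorQuotientMap_squareRelations]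
  exact mem_map_mk'_sup_spanTwoTmulOne
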